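/- Let A be an m-by-n real matrix with nonnegative entries. If A is TN_3 (resp. TP_3), then for every real number t ≥ 1 the Hadamard power A^{∘t} is TN_3 (resp. TP_3). -/

import Mathlib

/-- `A` is totally nonnegative of order `r`: every minor of size at most `r` is nonnegative. -/
def IsTNr {m n : ℕ} (A : Matrix (Fin m) (Fin n) ℝ) (r : ℕ) : Prop :=
  ∀ (k : ℕ), k ≤ r → ∀ (f : Fin k → Fin m) (g : Fin k → Fin n),
    StrictMono f → StrictMono g → 0 ≤ (A.submatrix f g).det

/-- `A` is totally positive of order `r`: every minor of size at most `r` is positive. -/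
def IsTPr {m n : ℕ} (A : Matrix (Fin m) (Fin n) ℝ) (r : ℕ) : Prop :=
  ∀ (k : ℕ), k ≤ r → ∀ (f : Fin k → Fin m) (g : Fin k → Fin n),
    StrictMono f → StrictMono g → 0 < (A.submatrix f g).det

/-- The contiguous `k`-by-`k` submatrix of `A` with rows `a, a+1, …, a+k-1`
and columns `b, b+1, …, b+k-1`. -/
def ctgSub {m n : ℕ} (A : Matrix (Fin m) (Fin n) ℝ) (k a b : ℕ)
    (ha : a + k ≤ m) (hb : b + k ≤ n) : Matrix (Fin k) (Fin k) ℝ :=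
  Matrix.of fun i j => A ⟨a + i.1, by omega⟩ ⟨b + j.1, by omega⟩

/-- `A` is a Hankel matrix: the entry `A i j` depends only on `i + j`. -/
def IsHankel {m n : ℕ} (A : Matrix (Fin m) (Fin n) ℝ) : Prop :=
  ∀ (i i' : Fin m) (j j' : Fin n), i.1 + j.1 = i'.1 + j'.1 → A i j = A i' j'

/-- The Hadamard (entrywise) power `A^{∘t}` with real exponent `t` (via `Real.rpow`). -/
noncomputable def hadPow {m n : ℕ} (A : Matrix (Fin m) (Fin n) ℝ) (t : ℝ) :
    Matrix (Fin m) (Fin n) ℝ :=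
  Matrix.of fun i j => (A i j) ^ t

/-! Sizes one and two follow from monotonicity of `x ↦ x ^ t`. For a 3 × 3 matrix whose first row
and column are positive, Sylvester's identity with pivot `M 0 0` turns `0 ≤ det M` into
`(y - 1) * (z - 1) ≤ (x - 1) * (w - 1)`, where `x, y, z, w` are the ratios of the diagonal to the
antidiagonal product of the 2 × 2 minors through the pivot, and `1 ≤ x ≤ y, z` by total
nonnegativity of order two. The Hadamard power replaces these ratios by their `t`-th powers, and
the inequality survives because `s ↦ log ((1 + exp s) ^ t - 1)` is convex for `t ≥ 1`: in the
coordinates `log (u - 1)` it is Karamata's inequality for two points. If an off-pivot entry of the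
first row or column vanishes, either a whole row or column vanishes, or the determinant has only
four terms and Karamata's inequality for `x ↦ x ^ t` applies directly. -/

open Real Set Matrix

theorem ConvexOn.map_add_map_le_of_add_eq {D : Set ℝ} {f : ℝ → ℝ} (hf : ConvexOn ℝ D f)
    {a b c d : ℝ} (ha : a ∈ D) (hd : d ∈ D) (hab : a ≤ b) (hbd : b ≤ d) (hsum : b + c = a + d) :
    f b + f c ≤ f a + f d := by
  rcases (hab.trans hbd).eq_or_lt with rfl | had
  · obtain rfl : b = a := le_antisymm hbd hab
    obtain rfl : c = b := by linarith
    rfl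
  · set μ := (d - b) / (d - a)
    have hμ : μ * (d - a) = d - b := div_mul_cancel₀ _ (sub_pos.2 had).ne'
    have hμ0 : 0 ≤ μ := div_nonneg (sub_nonneg.2 hbd) (sub_pos.2 had).le
    have hμ1 : 0 ≤ 1 - μ := sub_nonneg.2 <| (div_le_one (sub_pos.2 had)).2 (by linarith)
    have hb := hf.2 ha hd hμ0 hμ1 (by ring)
    have hc := hf.2 ha hd hμ1 hμ0 (by ring)
    simp only [smul_eq_mul] at hb hc
    rw [show μ * a + (1 - μ) * d = b by linear_combination -hμ] at hb
    rw [show (1 - μ) * a + μ * d = c by linear_combination hμ - hsum] at hc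
    linarith

theorem one_sub_rpow_div_one_sub_le {t r r' : ℝ} (ht : 1 ≤ t) (hr : 0 ≤ r) (hrr' : r ≤ r')
    (hr' : r' < 1) : (1 - r ^ t) / (1 - r) ≤ (1 - r' ^ t) / (1 - r') := by
  have := (convexOn_rpow ht).secant_mono (a := 1) (mem_Ici.2 zero_le_one) (mem_Ici.2 hr)
    (mem_Ici.2 (hr.trans hrr')) (by linarith) hr'.ne hrr'
  rwa [one_rpow, ← neg_div_neg_eq, ← neg_div_neg_eq (r' ^ t - 1), neg_sub, neg_sub, neg_sub,
    neg_sub] at this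

theorem hasDerivAt_log_one_add_exp_rpow_sub_one {t : ℝ} (ht : 1 ≤ t) (s : ℝ) :
    HasDerivAt (fun s => log ((1 + exp s) ^ t - 1))
      (t / ((1 - (1 + exp s)⁻¹ ^ t) / (1 - (1 + exp s)⁻¹))) s := by
  have hu : 1 < 1 + exp s := by linarith [exp_pos s]
  have hut : 1 < (1 + exp s) ^ t := one_lt_rpow hu (by linarith)
  have h := ((((hasDerivAt_exp s).const_add 1).rpow_const (p := t)
    (Or.inl (by linarith))).sub_const 1).log (by linarith)
  convert h using 1
  rw [inv_rpow (by linarith), rpow_sub_one (by linarith)]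
  field_simp
  ring

theorem convexOn_log_one_add_exp_rpow_sub_one {t : ℝ} (ht : 1 ≤ t) :
    ConvexOn ℝ univ (fun s => log ((1 + exp s) ^ t - 1)) := by
  have hK := hasDerivAt_log_one_add_exp_rpow_sub_one ht
  refine Monotone.convexOn_univ_of_deriv (fun s => (hK s).differentiableAt) ?_
  intro s s' hss'
  have hr : ∀ s : ℝ, 0 < (1 + exp s)⁻¹ ∧ (1 + exp s)⁻¹ < 1 := fun s =>
    ⟨by positivity, inv_lt_one_of_one_lt₀ (by linarith [exp_pos s])⟩
  rw [(hK s).deriv, (hK s').deriv]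
  -- `(1 - r ^ t) / (1 - r)` is the slope of the convex `r ↦ r ^ t` between `r` and `1`, and
  -- `r = (1 + exp s)⁻¹` decreases with `s`.
  refine div_le_div_of_nonneg_left (by linarith) (div_pos ?_ ?_) ?_
  · linarith [rpow_lt_one (hr s').1.le (hr s').2 (by linarith : (0:ℝ) < t)]
  · linarith [(hr s').2]
  · exact one_sub_rpow_div_one_sub_le ht (hr s').1.le
      (inv_anti₀ (by positivity) (by gcongr)) (hr s).2

theorem sub_one_mul_sub_one_rpow_le_of_eq {t x y z w : ℝ} (ht : 1 ≤ t) (hx : 1 < x)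
    (hxy : x ≤ y) (hxz : x ≤ z) (h : (y - 1) * (z - 1) = (x - 1) * (w - 1)) :
    (y ^ t - 1) * (z ^ t - 1) ≤ (x ^ t - 1) * (w ^ t - 1) := by
  have hy : 1 < y := hx.trans_le hxy
  have hz : 1 < z := hx.trans_le hxz
  have hw : 1 < w := by nlinarith
  -- Karamata's inequality in the coordinates `log (u - 1)`, where `h` says the sums agree.
  have hK : ∀ u : ℝ, 1 < u → log ((1 + exp (log (u - 1))) ^ t - 1) = log (u ^ t - 1) := by
    intro u hu
    rw [exp_log (by linarith), add_sub_cancel]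
  have hpow : ∀ u : ℝ, 1 < u → 0 < u ^ t - 1 := fun u hu =>
    sub_pos.2 (one_lt_rpow hu (by linarith))
  have hsum : log (y - 1) + log (z - 1) = log (x - 1) + log (w - 1) := by
    rw [← log_mul, ← log_mul, h] <;> linarith
  have hxz' : log (x - 1) ≤ log (z - 1) := log_le_log (by linarith) (by linarith)
  have key := (convexOn_log_one_add_exp_rpow_sub_one ht).map_add_map_le_of_add_eq (mem_univ _)
    (mem_univ _) (log_le_log (by linarith) (by linarith)) (by linarith) hsum
  rwa [hK x hx, hK y hy, hK z hz, hK w hw, ← log_mul (hpow y hy).ne' (hpow z hz).ne',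
    ← log_mul (hpow x hx).ne' (hpow w hw).ne',
    log_le_log_iff (mul_pos (hpow y hy) (hpow z hz)) (mul_pos (hpow x hx) (hpow w hw))] at key

theorem sub_one_mul_sub_one_rpow_le {t x y z w : ℝ} (ht : 1 ≤ t) (hx : 1 ≤ x)
    (hxy : x ≤ y) (hxz : x ≤ z) (h : (y - 1) * (z - 1) ≤ (x - 1) * (w - 1)) :
    (y ^ t - 1) * (z ^ t - 1) ≤ (x ^ t - 1) * (w ^ t - 1) := by
  rcases hx.eq_or_lt with rfl | hx
  · obtain rfl | rfl : y = 1 ∨ z = 1 := by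
      have : (y - 1) * (z - 1) = 0 := le_antisymm (by linarith) (by nlinarith)
      rcases mul_eq_zero.1 this with h | h
      exacts [.inl (by linarith), .inr (by linarith)]
    all_goals simp
  obtain ⟨w₀, hw₀⟩ : ∃ w₀, (y - 1) * (z - 1) = (x - 1) * (w₀ - 1) :=
    ⟨1 + (y - 1) * (z - 1) / (x - 1), by
      rw [add_sub_cancel_left, mul_div_cancel₀ _ (by linarith)]⟩
  have hw₀1 : 1 ≤ w₀ := by nlinarith
  have hw₀w : w₀ ≤ w := by nlinarith
  calc (y ^ t - 1) * (z ^ t - 1) ≤ (x ^ t - 1) * (w₀ ^ t - 1) :=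
        sub_one_mul_sub_one_rpow_le_of_eq ht hx hxy hxz hw₀
    _ ≤ (x ^ t - 1) * (w ^ t - 1) := by
        gcongr
        linarith [one_lt_rpow hx (by linarith : (0:ℝ) < t)]

theorem sub_one_mul_sub_one_rpow_lt {t x y z w : ℝ} (ht : 1 ≤ t) (hx : 1 < x)
    (hxy : x ≤ y) (hxz : x ≤ z) (h : (y - 1) * (z - 1) < (x - 1) * (w - 1)) :
    (y ^ t - 1) * (z ^ t - 1) < (x ^ t - 1) * (w ^ t - 1) := by
  obtain ⟨w₀, hw₀⟩ : ∃ w₀, (y - 1) * (z - 1) = (x - 1) * (w₀ - 1) :=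
    ⟨1 + (y - 1) * (z - 1) / (x - 1), by
      rw [add_sub_cancel_left, mul_div_cancel₀ _ (by linarith)]⟩
  have hw₀1 : 1 ≤ w₀ := by nlinarith
  have hw₀w : w₀ < w := by nlinarith
  calc (y ^ t - 1) * (z ^ t - 1) ≤ (x ^ t - 1) * (w₀ ^ t - 1) :=
        sub_one_mul_sub_one_rpow_le_of_eq ht hx hxy hxz hw₀
    _ < (x ^ t - 1) * (w ^ t - 1) := by
        gcongr
        linarith [one_lt_rpow hx (by linarith : (0:ℝ) < t)]

theorem rpow_add_rpow_le_rpow_add_rpow {t P Q R S : ℝ} (ht : 1 ≤ t) (hQ : 0 ≤ Q) (hR : 0 ≤ R)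
    (hS : 0 ≤ S) (hQP : Q ≤ P) (hRP : R ≤ P) (hsum : Q + R ≤ P + S) :
    Q ^ t + R ^ t ≤ P ^ t + S ^ t := by
  have ht0 : 0 ≤ t := by linarith
  -- Raise `R` to `a + P - Q` and lower `S` to `a`: then the sums agree.
  set a := max 0 (Q + R - P)
  have ha0 : 0 ≤ a := le_max_left _ _
  calc Q ^ t + R ^ t ≤ Q ^ t + (a + P - Q) ^ t := by
        gcongr
        linarith [le_max_right 0 (Q + R - P)]
    _ ≤ a ^ t + P ^ t := (convexOn_rpow ht).map_add_map_le_of_add_eq ha0 (hQ.trans hQP)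
        (max_le hQ (by linarith)) hQP (by ring)
    _ ≤ P ^ t + S ^ t := by
        rw [add_comm]
        gcongr
        exact max_le hS (by linarith)

section TotalPositivity

variable {m n : ℕ}

theorem IsTNr.mono {A : Matrix (Fin m) (Fin n) ℝ} {r s : ℕ} (hA : IsTNr A r) (hsr : s ≤ r) :
    IsTNr A s :=
  fun k hk => hA k (hk.trans hsr)

theorem IsTPr.mono {A : Matrix (Fin m) (Fin n) ℝ} {r s : ℕ} (hA : IsTPr A r) (hsr : s ≤ r) :
    IsTPr A s :=
  fun k hk => hA k (hk.trans hsr)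

theorem IsTPr.isTNr {A : Matrix (Fin m) (Fin n) ℝ} {r : ℕ} (hA : IsTPr A r) : IsTNr A r :=
  fun k hk f g hf hg => (hA k hk f g hf hg).le

theorem IsTNr.submatrix {A : Matrix (Fin m) (Fin n) ℝ} {r p q : ℕ} (hA : IsTNr A r)
    {f : Fin p → Fin m} {g : Fin q → Fin n} (hf : StrictMono f) (hg : StrictMono g) :
    IsTNr (A.submatrix f g) r := fun k hk f' g' hf' hg' => by
  simpa only [submatrix_submatrix] using hA k hk _ _ (hf.comp hf') (hg.comp hg')

theorem IsTPr.submatrix {A : Matrix (Fin m) (Fin n) ℝ} {r p q : ℕ} (hA : IsTPr A r)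
    {f : Fin p → Fin m} {g : Fin q → Fin n} (hf : StrictMono f) (hg : StrictMono g) :
    IsTPr (A.submatrix f g) r := fun k hk f' g' hf' hg' => by
  simpa only [submatrix_submatrix] using hA k hk _ _ (hf.comp hf') (hg.comp hg')

theorem IsTNr.transpose {A : Matrix (Fin m) (Fin n) ℝ} {r : ℕ} (hA : IsTNr A r) :
    IsTNr Aᵀ r := fun k hk f g hf hg => by
  simpa only [← transpose_submatrix, det_transpose] using hA k hk g f hg hf

theorem IsTNr.det_nonneg {A : Matrix (Fin n) (Fin n) ℝ} {r : ℕ} (hA : IsTNr A r) (hn : n ≤ r) :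
    0 ≤ A.det := by
  simpa using hA n hn id id strictMono_id strictMono_id

theorem IsTPr.det_pos {A : Matrix (Fin n) (Fin n) ℝ} {r : ℕ} (hA : IsTPr A r) (hn : n ≤ r) :
    0 < A.det := by
  simpa using hA n hn id id strictMono_id strictMono_id

theorem IsTNr.nonneg {A : Matrix (Fin m) (Fin n) ℝ} {r : ℕ} (hA : IsTNr A r) (hr : 1 ≤ r)
    (i : Fin m) (j : Fin n) : 0 ≤ A i j := by
  have := hA 1 hr ![i] ![j] (by simp [Fin.strictMono_iff_lt_succ])
    (by simp [Fin.strictMono_iff_lt_succ])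
  rwa [det_fin_one] at this

theorem IsTPr.pos {A : Matrix (Fin m) (Fin n) ℝ} {r : ℕ} (hA : IsTPr A r) (hr : 1 ≤ r)
    (i : Fin m) (j : Fin n) : 0 < A i j := by
  have := hA 1 hr ![i] ![j] (by simp [Fin.strictMono_iff_lt_succ])
    (by simp [Fin.strictMono_iff_lt_succ])
  rwa [det_fin_one] at this

theorem IsTNr.mul_le_mul_of_lt_of_lt {A : Matrix (Fin m) (Fin n) ℝ} {r : ℕ} (hA : IsTNr A r)
    (hr : 2 ≤ r) {i i' : Fin m} {j j' : Fin n} (hi : i < i') (hj : j < j') :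
    A i j' * A i' j ≤ A i j * A i' j' := by
  have := hA 2 hr ![i, i'] ![j, j'] (by simp [Fin.strictMono_iff_lt_succ, hi])
    (by simp [Fin.strictMono_iff_lt_succ, hj])
  rw [det_fin_two] at this
  simpa [mul_comm] using this

theorem IsTPr.mul_lt_mul_of_lt_of_lt {A : Matrix (Fin m) (Fin n) ℝ} {r : ℕ} (hA : IsTPr A r)
    (hr : 2 ≤ r) {i i' : Fin m} {j j' : Fin n} (hi : i < i') (hj : j < j') :
    A i j' * A i' j < A i j * A i' j' := by
  have := hA 2 hr ![i, i'] ![j, j'] (by simp [Fin.strictMono_iff_lt_succ, hi])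
    (by simp [Fin.strictMono_iff_lt_succ, hj])
  rw [det_fin_two] at this
  simpa [mul_comm] using this

theorem IsTNr.apply_eq_zero_of_apply_eq_zero {A : Matrix (Fin m) (Fin n) ℝ} (hA : IsTNr A 2)
    {i i' : Fin m} {j₀ : Fin n} (hi : i < i') (h : A i j₀ = 0) (h' : A i' j₀ ≠ 0) (j : Fin n)
    (hj : j₀ ≤ j) : A i j = 0 := by
  rcases hj.eq_or_lt with rfl | hj
  · exact h
  have hle := hA.mul_le_mul_of_lt_of_lt le_rfl hi hj
  rw [h, zero_mul] at hle
  have hpos := (hA.nonneg (by norm_num) i' j₀).lt_of_ne' h'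
  nlinarith [hA.nonneg (by norm_num) i j]

theorem hadPow_transpose (A : Matrix (Fin m) (Fin n) ℝ) (t : ℝ) :
    hadPow Aᵀ t = (hadPow A t)ᵀ :=
  rfl

theorem det_hadPow_eq_zero_of_row_eq_zero {A : Matrix (Fin n) (Fin n) ℝ} {t : ℝ} (ht : t ≠ 0)
    (i : Fin n) (h : ∀ j, A i j = 0) : (hadPow A t).det = 0 :=
  det_eq_zero_of_row_eq_zero i fun j => by simp [hadPow, h j, zero_rpow ht]

end TotalPositivity

noncomputable def pivotRatio (M : Matrix (Fin 3) (Fin 3) ℝ) (i j : Fin 3) : ℝ :=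
  M 0 0 * M i j / (M 0 j * M i 0)

/-- Sylvester's identity with pivot `M 0 0`: `pivotRatio M i j - 1` is the minor on rows `{0, i}`
and columns `{0, j}`, divided by `M 0 j * M i 0`. -/
theorem mul_det_fin_three_eq (M : Matrix (Fin 3) (Fin 3) ℝ) (hb : M 0 1 ≠ 0) (hc : M 0 2 ≠ 0)
    (hd : M 1 0 ≠ 0) (hg : M 2 0 ≠ 0) :
    M 0 0 * M.det = M 0 1 * M 0 2 * M 1 0 * M 2 0 *
      ((pivotRatio M 1 1 - 1) * (pivotRatio M 2 2 - 1) -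
        (pivotRatio M 1 2 - 1) * (pivotRatio M 2 1 - 1)) := by
  rw [det_fin_three]
  simp only [pivotRatio]
  field_simp
  ring

theorem det_fin_three_nonneg_iff (M : Matrix (Fin 3) (Fin 3) ℝ) (ha : 0 < M 0 0)
    (hb : 0 < M 0 1) (hc : 0 < M 0 2) (hd : 0 < M 1 0) (hg : 0 < M 2 0) :
    0 ≤ M.det ↔ (pivotRatio M 1 2 - 1) * (pivotRatio M 2 1 - 1) ≤
      (pivotRatio M 1 1 - 1) * (pivotRatio M 2 2 - 1) := by
  rw [← mul_nonneg_iff_of_pos_left ha, mul_det_fin_three_eq M hb.ne' hc.ne' hd.ne' hg.ne',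
    mul_nonneg_iff_of_pos_left (by positivity), sub_nonneg]

theorem det_fin_three_pos_iff (M : Matrix (Fin 3) (Fin 3) ℝ) (ha : 0 < M 0 0)
    (hb : 0 < M 0 1) (hc : 0 < M 0 2) (hd : 0 < M 1 0) (hg : 0 < M 2 0) :
    0 < M.det ↔ (pivotRatio M 1 2 - 1) * (pivotRatio M 2 1 - 1) <
      (pivotRatio M 1 1 - 1) * (pivotRatio M 2 2 - 1) := by
  rw [← mul_pos_iff_of_pos_left ha, mul_det_fin_three_eq M hb.ne' hc.ne' hd.ne' hg.ne',
    mul_pos_iff_of_pos_left (by positivity), sub_pos]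

theorem pivotRatio_hadPow {M : Matrix (Fin 3) (Fin 3) ℝ} (hM : ∀ i j, 0 ≤ M i j) (t : ℝ)
    (i j : Fin 3) : pivotRatio (hadPow M t) i j = pivotRatio M i j ^ t := by
  simp only [pivotRatio, hadPow, of_apply]
  rw [div_rpow (mul_nonneg (hM _ _) (hM _ _)) (mul_nonneg (hM _ _) (hM _ _)),
    mul_rpow (hM _ _) (hM _ _), mul_rpow (hM _ _) (hM _ _)]

theorem IsTNr.pivotRatio_le {M : Matrix (Fin 3) (Fin 3) ℝ} (hM : IsTNr M 2) (ha : 0 < M 0 0)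
    (hb : 0 < M 0 1) (hc : 0 < M 0 2) (hd : 0 < M 1 0) (hg : 0 < M 2 0) :
    pivotRatio M 1 1 ≤ pivotRatio M 1 2 ∧ pivotRatio M 1 1 ≤ pivotRatio M 2 1 := by
  simp only [pivotRatio]
  constructor
  · rw [div_le_div_iff₀ (by positivity) (by positivity)]
    nlinarith [hM.mul_le_mul_of_lt_of_lt le_rfl (i := 0) (i' := 1) (j := 1) (j' := 2)
      (by decide) (by decide), mul_pos ha hd]
  · rw [div_le_div_iff₀ (by positivity) (by positivity)]
    nlinarith [hM.mul_le_mul_of_lt_of_lt le_rfl (i := 1) (i' := 2) (j := 0) (j' := 1)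
      (by decide) (by decide), mul_pos ha hb]

section FinThree

variable {M : Matrix (Fin 3) (Fin 3) ℝ} {t : ℝ}

theorem IsTNr.det_hadPow_nonneg_of_ne_zero (hM : IsTNr M 3) (ht : 1 ≤ t) (hb : M 0 1 ≠ 0)
    (hc : M 0 2 ≠ 0) (hd : M 1 0 ≠ 0) (hg : M 2 0 ≠ 0) : 0 ≤ (hadPow M t).det := by
  have h0 := hM.nonneg (by norm_num)
  have hb := (h0 0 1).lt_of_ne' hb
  have hc := (h0 0 2).lt_of_ne' hc
  have hd := (h0 1 0).lt_of_ne' hd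
  have hg := (h0 2 0).lt_of_ne' hg
  have hbd := hM.mul_le_mul_of_lt_of_lt (by norm_num) (i := 0) (i' := 1) (j := 0) (j' := 1)
    (by decide) (by decide)
  have ha : 0 < M 0 0 := pos_of_mul_pos_left ((mul_pos hb hd).trans_le hbd) (h0 1 1)
  obtain ⟨hxy, hxz⟩ := (hM.mono (by norm_num)).pivotRatio_le ha hb hc hd hg
  have hpow {i j} (h : 0 < M i j) : 0 < hadPow M t i j := rpow_pos_of_pos h t
  rw [det_fin_three_nonneg_iff _ (hpow ha) (hpow hb) (hpow hc) (hpow hd) (hpow hg)]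
  simp only [pivotRatio_hadPow h0]
  exact sub_one_mul_sub_one_rpow_le ht ((one_le_div (mul_pos hb hd)).2 hbd) hxy hxz
    ((det_fin_three_nonneg_iff M ha hb hc hd hg).1 (hM.det_nonneg le_rfl))

theorem IsTNr.det_hadPow_nonneg_of_bottom_left_eq_zero (hM : IsTNr M 3) (ht : 1 ≤ t)
    (hg : M 2 0 = 0) : 0 ≤ (hadPow M t).det := by
  have h0 := hM.nonneg (by norm_num)
  have hfh := hM.mul_le_mul_of_lt_of_lt (by norm_num) (i := 1) (i' := 2) (j := 1) (j' := 2)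
    (by decide) (by decide)
  have hbd := hM.mul_le_mul_of_lt_of_lt (by norm_num) (i := 0) (i' := 1) (j := 0) (j' := 1)
    (by decide) (by decide)
  have hdet := hM.det_nonneg le_rfl
  rw [det_fin_three] at hdet ⊢
  simp only [hadPow, of_apply, hg, zero_rpow (by linarith : t ≠ 0)]
  rw [hg] at hdet
  have h3 {x y z : ℝ} (hx : 0 ≤ x) (hy : 0 ≤ y) (hz : 0 ≤ z) :
      (x * y * z) ^ t = x ^ t * y ^ t * z ^ t := by
    rw [mul_rpow (mul_nonneg hx hy) hz, mul_rpow hx hy]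
  have hkar := rpow_add_rpow_le_rpow_add_rpow ht (P := M 0 0 * M 1 1 * M 2 2)
    (Q := M 0 0 * M 1 2 * M 2 1) (R := M 0 1 * M 1 0 * M 2 2) (S := M 0 2 * M 1 0 * M 2 1)
    (mul_nonneg (mul_nonneg (h0 _ _) (h0 _ _)) (h0 _ _))
    (mul_nonneg (mul_nonneg (h0 _ _) (h0 _ _)) (h0 _ _))
    (mul_nonneg (mul_nonneg (h0 _ _) (h0 _ _)) (h0 _ _))
    (by rw [mul_assoc, mul_assoc]; exact mul_le_mul_of_nonneg_left hfh (h0 0 0))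
    (mul_le_mul_of_nonneg_right hbd (h0 2 2)) (by linarith)
  rw [h3 (h0 _ _) (h0 _ _) (h0 _ _), h3 (h0 _ _) (h0 _ _) (h0 _ _), h3 (h0 _ _) (h0 _ _) (h0 _ _),
    h3 (h0 _ _) (h0 _ _) (h0 _ _)] at hkar
  linarith

theorem IsTNr.det_hadPow_nonneg_fin_three (hM : IsTNr M 3) (ht : 1 ≤ t) :
    0 ≤ (hadPow M t).det := by
  have ht0 : t ≠ 0 := by linarith
  have hMt := hM.transpose
  have hdet_transpose : (hadPow Mᵀ t).det = (hadPow M t).det := by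
    rw [hadPow_transpose, det_transpose]
  rcases eq_or_ne (M 2 0) 0 with hg | hg
  · exact hM.det_hadPow_nonneg_of_bottom_left_eq_zero ht hg
  rcases eq_or_ne (M 0 2) 0 with hc | hc
  · exact hdet_transpose ▸ hMt.det_hadPow_nonneg_of_bottom_left_eq_zero ht hc
  rcases eq_or_ne (M 1 0) 0 with hd | hd
  · refine (det_hadPow_eq_zero_of_row_eq_zero ht0 1 fun j => ?_).ge
    exact (hM.mono (by norm_num)).apply_eq_zero_of_apply_eq_zero (by decide) hd hg j (Fin.zero_le j)
  rcases eq_or_ne (M 0 1) 0 with hb | hb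
  · refine hdet_transpose ▸ (det_hadPow_eq_zero_of_row_eq_zero ht0 1 fun j => ?_).ge
    exact (hMt.mono (by norm_num)).apply_eq_zero_of_apply_eq_zero (by decide) hb hc j
      (Fin.zero_le j)
  exact hM.det_hadPow_nonneg_of_ne_zero ht hb hc hd hg

theorem IsTPr.det_hadPow_pos_fin_three (hM : IsTPr M 3) (ht : 1 ≤ t) :
    0 < (hadPow M t).det := by
  have h0 := hM.pos (by norm_num)
  obtain ⟨hxy, hxz⟩ := (hM.isTNr.mono (by norm_num)).pivotRatio_le (h0 0 0) (h0 0 1) (h0 0 2)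
    (h0 1 0) (h0 2 0)
  have hx : 1 < pivotRatio M 1 1 := (one_lt_div (mul_pos (h0 0 1) (h0 1 0))).2 <|
    hM.mul_lt_mul_of_lt_of_lt (by norm_num) (i := 0) (i' := 1) (j := 0) (j' := 1)
      (by decide) (by decide)
  have hpow (i j) : 0 < hadPow M t i j := rpow_pos_of_pos (h0 i j) t
  rw [det_fin_three_pos_iff _ (hpow 0 0) (hpow 0 1) (hpow 0 2) (hpow 1 0) (hpow 2 0)]
  simp only [pivotRatio_hadPow fun i j => (h0 i j).le]
  exact sub_one_mul_sub_one_rpow_lt ht hx hxy hxz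
    ((det_fin_three_pos_iff M (h0 0 0) (h0 0 1) (h0 0 2) (h0 1 0) (h0 2 0)).1
      (hM.det_pos le_rfl))

end FinThree

theorem IsTNr.det_hadPow_nonneg {k : ℕ} {B : Matrix (Fin k) (Fin k) ℝ} (hB : IsTNr B k)
    (hk : k ≤ 3) {t : ℝ} (ht : 1 ≤ t) : 0 ≤ (hadPow B t).det := by
  interval_cases k
  · simp
  · rw [det_fin_one]
    exact rpow_nonneg (hB.nonneg le_rfl 0 0) t
  · have h0 := hB.nonneg (by norm_num)
    rw [det_fin_two, sub_nonneg]
    simp only [hadPow, of_apply]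
    rw [← mul_rpow (h0 _ _) (h0 _ _), ← mul_rpow (h0 _ _) (h0 _ _)]
    exact rpow_le_rpow (mul_nonneg (h0 _ _) (h0 _ _))
      (hB.mul_le_mul_of_lt_of_lt le_rfl (by decide) (by decide)) (by linarith)
  · exact hB.det_hadPow_nonneg_fin_three ht

theorem IsTPr.det_hadPow_pos {k : ℕ} {B : Matrix (Fin k) (Fin k) ℝ} (hB : IsTPr B k)
    (hk : k ≤ 3) {t : ℝ} (ht : 1 ≤ t) : 0 < (hadPow B t).det := by
  interval_cases k
  · simp
  · rw [det_fin_one]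
    exact rpow_pos_of_pos (hB.pos le_rfl 0 0) t
  · have h0 := hB.pos (by norm_num)
    rw [det_fin_two, sub_pos]
    simp only [hadPow, of_apply]
    rw [← mul_rpow (h0 _ _).le (h0 _ _).le, ← mul_rpow (h0 _ _).le (h0 _ _).le]
    exact rpow_lt_rpow (mul_pos (h0 _ _) (h0 _ _)).le
      (hB.mul_lt_mul_of_lt_of_lt le_rfl (by decide) (by decide)) (by linarith)
  · exact hB.det_hadPow_pos_fin_three ht

theorem hadamard_power_TN3_TP3_general {m n : ℕ} (A : Matrix (Fin m) (Fin n) ℝ)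
    (t : ℝ) (ht : 1 ≤ t) :
    (IsTNr A 3 → IsTNr (hadPow A t) 3) ∧ (IsTPr A 3 → IsTPr (hadPow A t) 3) :=
  ⟨fun hA _ hk _ _ hf hg => ((hA.submatrix hf hg).mono hk).det_hadPow_nonneg hk ht,
    fun hA _ hk _ _ hf hg => ((hA.submatrix hf hg).mono hk).det_hadPow_pos hk ht⟩

/-- Theorem 5.2. If `A` has nonnegative entries and is TN_3
(resp. TP_3), then `A^{∘t}` is TN_3 (resp. TP_3) for every real `t ≥ 1`. -/
theorem hadamard_power_TN3_TP3 {m n : ℕ} (A : Matrix (Fin m) (Fin n) ℝ)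
    (h0 : ∀ i j, 0 ≤ A i j) (t : ℝ) (ht : 1 ≤ t) :
    (IsTNr A 3 → IsTNr (hadPow A t) 3) ∧ (IsTPr A 3 → IsTPr (hadPow A t) 3) :=
  hadamard_power_TN3_TP3_general A t ht
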